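/- arXiv:1404.2354 — 6 statements merged into one kernel-verified Lean document; each statement's English description precedes it below -/
import Mathlib

section
/- Let γ be an element of G_l(N), i.e. an integer 2×2 matrix [[a,b],[c,d]] with N | c and determinant ad − bc = l > 0. Then for every z in the upper half-plane, |u_γ(z)| ≥ 2√l. -/
/-- `u_γ(z) = j(γ,z)·(conj z − γ·z)/Im z` for `γ = [[a,b],[c,d]]`. -/
noncomputable def uMat (a b c d : ℝ) (z : ℂ) : ℂ :=
  ((c * z + d) * ((starRingEnd ℂ) z - (a * z + b) / (c * z + d))) / (z.im : ℂ)

lemma key_ineq (a b c d l x y : ℝ) (hy : 0 < y) (hl : 0 < l) (hdet : a * d - b * c = l) :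
    4 * l ≤ (a + d) ^ 2 + ((c * (x ^ 2 + y ^ 2) + (d - a) * x - b) / y) ^ 2 := by
  set r := (c * (x ^ 2 + y ^ 2) + (d - a) * x - b) / y with hrdef
  have hr : r * y = c * (x ^ 2 + y ^ 2) + (d - a) * x - b := by
    rw [hrdef, div_mul_cancel₀ _ hy.ne']
  rcases eq_or_ne c 0 with hc | hc
  · subst hc
    nlinarith [sq_nonneg (a - d), sq_nonneg r]
  · rcases le_or_gt (4 * l) ((a + d) ^ 2) with h | h
    · nlinarith [sq_nonneg r]
    · have hc2 : 0 < c ^ 2 * y ^ 2 := by positivity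
      have hid : c * (r * y) = (c * x + (d - a) / 2) ^ 2 + (4 * l - (a + d) ^ 2) / 4
          + c ^ 2 * y ^ 2 := by
        rw [hr]; linear_combination hdet
      have h1 : r ^ 2 * (c ^ 2 * y ^ 2)
          = ((c * x + (d - a) / 2) ^ 2 + (4 * l - (a + d) ^ 2) / 4 + c ^ 2 * y ^ 2) ^ 2 := by
        rw [← hid]; ring
      nlinarith [h1, sq_nonneg (c * x + (d - a) / 2), hc2,
        sq_nonneg ((4 * l - (a + d) ^ 2) / 4 - c ^ 2 * y ^ 2), h]

theorem abs_u_ge_two_sqrt_det (N : ℕ) (a b c d l : ℤ) (hc : (N : ℤ) ∣ c)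
    (hl : 0 < l) (hdet : a * d - b * c = l) (z : ℂ) (hz : 0 < z.im) :
    2 * Real.sqrt (l : ℝ) ≤
      ‖uMat (a : ℝ) (b : ℝ) (c : ℝ) (d : ℝ) z‖ := by
  have hdetR : (a : ℝ) * d - b * c = l := by exact_mod_cast hdet
  have hlR : (0 : ℝ) < l := by exact_mod_cast hl
  have hne : ((c : ℝ) : ℂ) * z + ((d : ℝ) : ℂ) ≠ 0 := by
    intro h
    have him : (c : ℝ) * z.im = 0 := by
      have := congrArg Complex.im h
      simpa using this
    have hc0 : (c : ℝ) = 0 := by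
      rcases mul_eq_zero.1 him with h' | h'
      · exact h'
      · exact absurd h' (ne_of_gt hz)
    have hd0 : (d : ℝ) = 0 := by
      have := congrArg Complex.re h
      simpa [hc0] using this
    rw [hc0, hd0] at hdetR
    simp at hdetR
    linarith
  set w : ℂ := (((c : ℝ) : ℂ) * z + ((d : ℝ) : ℂ)) * (starRingEnd ℂ) z
      - (((a : ℝ) : ℂ) * z + ((b : ℝ) : ℂ)) with hw
  have h1 : uMat (a : ℝ) (b : ℝ) (c : ℝ) (d : ℝ) z = w / (z.im : ℂ) := by
    rw [uMat, hw, mul_sub, mul_div_cancel₀ _ hne]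
  have hwre : w.re = (c : ℝ) * (z.re ^ 2 + z.im ^ 2) + ((d : ℝ) - a) * z.re - b := by
    simp [hw, Complex.mul_re, Complex.mul_im]
    ring
  have hwim : w.im = -((a : ℝ) + d) * z.im := by
    simp [hw, Complex.mul_re, Complex.mul_im]
    ring
  have habs2 : ‖uMat (a : ℝ) (b : ℝ) (c : ℝ) (d : ℝ) z‖ ^ 2
      = ((a : ℝ) + d) ^ 2
        + (((c : ℝ) * (z.re ^ 2 + z.im ^ 2) + ((d : ℝ) - a) * z.re - b) / z.im) ^ 2 := by
    rw [h1, norm_div, div_pow, ← Complex.normSq_eq_norm_sq, Complex.normSq_apply, hwre, hwim]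
    have : ‖((z.im : ℝ) : ℂ)‖ = z.im := by
      rw [Complex.norm_real, Real.norm_eq_abs, abs_of_pos hz]
    rw [this]
    field_simp
    ring
  have hkey := key_ineq (a : ℝ) (b : ℝ) (c : ℝ) (d : ℝ) (l : ℝ) z.re z.im hz hlR hdetR
  have h2 : 2 * Real.sqrt (l : ℝ) = Real.sqrt (4 * l) := by
    rw [show (4 : ℝ) * l = 2 ^ 2 * l by ring, Real.sqrt_mul (by positivity),
      Real.sqrt_sq (by norm_num)]
  rw [h2]
  calc Real.sqrt (4 * l) ≤ Real.sqrt (‖uMat (a : ℝ) (b : ℝ) (c : ℝ) (d : ℝ) z‖ ^ 2) := by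
        apply Real.sqrt_le_sqrt
        rw [habs2]; exact hkey
    _ = ‖uMat (a : ℝ) (b : ℝ) (c : ℝ) (d : ℝ) z‖ := by
        rw [Real.sqrt_sq (norm_nonneg _)]
end

section
/- Let N be a positive square-free integer and let z = x + iy lie in the fundamental domain of the group generated by Γ₀(N) and all Atkin–Lehner operators of level N (equivalently, z has maximal imaginary part in its A₀(N)-orbit). Then Im(z) ≥ √3/(2N). -/
open Matrix in
/-- Atkin–Lehner operators of level `N`: matrices
`[[√r·a, b/√r],[√r·s, √r·d]] ∈ SL₂(ℝ)` with `r ∣ N`, `N ∣ rs`, `a,b,s,d ∈ ℤ`,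
`(a,s) = 1`. -/
def IsAtkinLehner (N : ℕ) (σ : Matrix (Fin 2) (Fin 2) ℝ) : Prop :=
  ∃ (r : ℕ) (a b s d : ℤ), 0 < r ∧ r ∣ N ∧ (N : ℤ) ∣ (r * s) ∧ IsCoprime a s ∧
    σ = !![Real.sqrt r * a, b / Real.sqrt r; Real.sqrt r * s, Real.sqrt r * d] ∧
    σ.det = 1

/-- Möbius action of a real 2×2 matrix on the upper half-plane. -/
noncomputable def moebius (σ : Matrix (Fin 2) (Fin 2) ℝ) (z : ℂ) : ℂ :=
  ((σ 0 0 : ℂ) * z + (σ 0 1 : ℂ)) / ((σ 1 0 : ℂ) * z + (σ 1 1 : ℂ))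

lemma round_sq_le (t : ℝ) : (t - round t)^2 ≤ 1/4 := by
  have h := abs_sub_round t
  nlinarith [abs_nonneg (t - round t), sq_abs (t - round t)]

lemma im_moebius_aux (A B C D : ℝ) (z : ℂ) (hz : 0 < z.im) (h : A*D - B*C = 1) :
    (((A:ℂ)*z + B)/((C:ℂ)*z + D)).im = z.im / Complex.normSq ((C:ℂ)*z + D) := by
  have hw : ((C:ℂ)*z + (D:ℂ)) ≠ 0 := by
    intro h0
    rw [Complex.ext_iff] at h0
    obtain ⟨h1, h2⟩ := h0
    simp [Complex.add_re, Complex.add_im, Complex.mul_re, Complex.mul_im] at h1 h2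
    have hC : C = 0 := by
      rcases h2 with h' | h'
      · exact h'
      · exact absurd h' hz.ne'
    rw [hC] at h1
    simp at h1
    rw [hC, h1] at h
    norm_num at h
  rw [Complex.div_im]
  have hre : (((C:ℂ)*z + (D:ℂ))).re = C*z.re + D := by simp
  have him : (((C:ℂ)*z + (D:ℂ))).im = C*z.im := by simp
  have hure : (((A:ℂ)*z + (B:ℂ))).re = A*z.re + B := by simp
  have huim : (((A:ℂ)*z + (B:ℂ))).im = A*z.im := by simp
  rw [hre, him, hure, huim, div_sub_div_same]
  congr 1
  linear_combination z.im * h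

/-- A point of the upper half-plane whose imaginary part is maximal in its
`A₀(N)`-orbit satisfies `Im z ≥ √3/(2N)`. -/
theorem im_ge_of_atkin_lehner_fundamental (N : ℕ) (hN : 0 < N) (hsq : Squarefree N)
    (z : ℂ) (hz : 0 < z.im)
    (hdom : ∀ σ : Matrix (Fin 2) (Fin 2) ℝ, IsAtkinLehner N σ →
      (moebius σ z).im ≤ z.im) :
    Real.sqrt 3 / (2 * N) ≤ z.im := by
  set m : ℤ := -round ((N:ℝ) * z.re) with hm
  set r : ℕ := Int.gcd m (N:ℤ) with hr
  have hN0 : (N:ℤ) ≠ 0 := by exact_mod_cast hN.ne'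
  have hr0 : 0 < r := Int.gcd_pos_of_ne_zero_right m hN0
  have hrm : (r:ℤ) ∣ m := Int.gcd_dvd_left m (N:ℤ)
  have hrN : r ∣ N := by
    have : (r:ℤ) ∣ (N:ℤ) := Int.gcd_dvd_right m (N:ℤ)
    exact_mod_cast this
  set d : ℤ := m / (r:ℤ) with hd
  set s : ℤ := ((N / r : ℕ) : ℤ) with hs
  have hrd : (r:ℤ) * d = m := Int.mul_ediv_cancel' hrm
  have hrsN : r * (N / r) = N := Nat.mul_div_cancel' hrN
  have hrs : (r:ℤ) * s = (N:ℤ) := by rw [hs, ← Nat.cast_mul, hrsN]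
  -- coprimality of m and s
  have hrdef : r = Nat.gcd m.natAbs N := by
    rw [hr, Int.gcd]; simp
  have hcop : Nat.Coprime m.natAbs (N / r) := by
    set g : ℕ := Nat.gcd m.natAbs (N / r) with hg
    have hg1 : g ∣ r := by
      rw [hrdef]
      exact Nat.dvd_gcd (Nat.gcd_dvd_left _ _)
        ((Nat.gcd_dvd_right _ _).trans (Nat.div_dvd_of_dvd hrN))
    have hgg : g * g ∣ N := by
      calc g * g ∣ r * (N / r) := mul_dvd_mul hg1 (Nat.gcd_dvd_right _ _)
      _ = N := hrsN
    exact Nat.isUnit_iff.mp (hsq g hgg)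
  have hcopms : IsCoprime m s := by
    rw [Int.isCoprime_iff_gcd_eq_one]
    have he : Int.gcd m s = Nat.gcd m.natAbs (N / r) := by
      rw [hs, Int.gcd, Int.natAbs_natCast]
    rw [he]; exact hcop
  obtain ⟨u, v, huv⟩ := hcopms
  -- build the Atkin–Lehner matrix
  have hRpos : (0:ℝ) < (r:ℝ) := by exact_mod_cast hr0
  set sq : ℝ := Real.sqrt (r:ℕ) with hsqr
  have hsq0 : 0 < sq := Real.sqrt_pos.mpr hRpos
  have hsqsq : sq * sq = (r:ℝ) := Real.mul_self_sqrt hRpos.le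
  set A : ℝ := sq * (u:ℝ) with hA
  set B : ℝ := ((-v : ℤ):ℝ) / sq with hB
  set C : ℝ := sq * (s:ℝ) with hC
  set D : ℝ := sq * (d:ℝ) with hD
  have hint : (r:ℤ) * u * d - (-v) * s = 1 := by
    linear_combination u * hrd + huv
  have hAD : A * D = (r:ℝ) * (u:ℝ) * (d:ℝ) := by rw [hA, hD, ← hsqsq]; ring
  have hBC : B * C = ((-v:ℤ):ℝ) * (s:ℝ) := by
    rw [hB, hC]; field_simp
  have hdet : A * D - B * C = 1 := by
    rw [hAD, hBC]; exact_mod_cast hint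
  set σ : Matrix (Fin 2) (Fin 2) ℝ := !![A, B; C, D] with hσ
  have hAL : IsAtkinLehner N σ := by
    refine ⟨r, u, -v, s, d, hr0, hrN, dvd_of_eq hrs.symm,
      ⟨m, v, by linear_combination huv⟩, rfl, ?_⟩
    rw [hσ, Matrix.det_fin_two_of]
    exact hdet
  have hσ00 : σ 0 0 = A := by rw [hσ]; simp
  have hσ01 : σ 0 1 = B := by rw [hσ]; simp
  have hσ10 : σ 1 0 = C := by rw [hσ]; simp
  have hσ11 : σ 1 1 = D := by rw [hσ]; simp
  have hmoe : (moebius σ z).im = z.im / Complex.normSq ((C:ℂ)*z + D) := by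
    rw [moebius, hσ00, hσ01, hσ10, hσ11]
    exact im_moebius_aux A B C D z hz hdet
  have hle := hdom σ hAL
  rw [hmoe] at hle
  set nsq : ℝ := Complex.normSq ((C:ℂ)*z + (D:ℂ)) with hnsqdef
  have hnsqpos : 0 < nsq := by
    rw [hnsqdef]
    apply Complex.normSq_pos.mpr
    intro h0
    rw [Complex.ext_iff] at h0
    obtain ⟨h1, h2⟩ := h0
    simp [Complex.add_re, Complex.add_im, Complex.mul_re, Complex.mul_im] at h1 h2
    rcases h2 with h' | h'
    · rw [h'] at h1; simp at h1; rw [h', h1] at hdet; norm_num at hdet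
    · exact absurd h' hz.ne'
  have hge1 : (1:ℝ) ≤ nsq := by
    rw [div_le_iff₀ hnsqpos] at hle
    have h' := le_of_mul_le_mul_left (by linarith : z.im * 1 ≤ z.im * nsq) hz
    linarith
  have hnsqval : nsq = (C*z.re + D)^2 + (C*z.im)^2 := by
    rw [hnsqdef, Complex.normSq_apply]
    simp [Complex.add_re, Complex.add_im, Complex.mul_re, Complex.mul_im]
    ring
  have hRs : (r:ℝ) * (s:ℝ) = (N:ℝ) := by exact_mod_cast hrs
  have hRd : (r:ℝ) * (d:ℝ) = (m:ℝ) := by exact_mod_cast hrd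
  have hkey : ((N:ℝ)*z.re + (m:ℝ))^2 + (N:ℝ)^2*z.im^2 = (r:ℝ) * nsq := by
    rw [hnsqval, hC, hD, ← hRs, ← hRd, ← hsqsq]
    ring
  have hRge1 : (1:ℝ) ≤ (r:ℝ) := by exact_mod_cast hr0
  have hbig : (1:ℝ) ≤ ((N:ℝ)*z.re + (m:ℝ))^2 + (N:ℝ)^2*z.im^2 := by
    rw [hkey]
    have h' := mul_le_mul hRge1 hge1 zero_le_one (le_trans zero_le_one hRge1)
    linarith
  have hround := abs_sub_round ((N:ℝ) * z.re)
  have hmval : ((N:ℝ)*z.re + (m:ℝ))^2 ≤ 1/4 := by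
    rw [hm]
    push_cast
    have h1 : (N:ℝ)*z.re + -(round ((N:ℝ)*z.re) : ℤ)
        = (N:ℝ)*z.re - round ((N:ℝ)*z.re) := by ring
    rw [h1]
    exact round_sq_le _
  have h34 : (3:ℝ)/4 ≤ (N:ℝ)^2 * z.im^2 := by linarith
  have hNpos : (0:ℝ) < N := by exact_mod_cast hN
  have h2 : Real.sqrt 3 ≤ 2 * (N:ℝ) * z.im := by
    have h3 : Real.sqrt 3 ≤ Real.sqrt ((2*(N:ℝ)*z.im)^2) := by
      apply Real.sqrt_le_sqrt
      have he : (2*(N:ℝ)*z.im)^2 = 4*((N:ℝ)^2*z.im^2) := by ring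
      rw [he]; linarith
    rwa [Real.sqrt_sq (by positivity)] at h3
  rw [div_le_iff₀ (by positivity)]
  linarith
end

section
/- Let N be a positive square-free integer and z = x + iy a point in the upper half-plane such that Im(σz) ≤ Im(z) for every Atkin–Lehner operator σ of level N. Then for every pair of integers (c,d) ≠ (0,0), one has |cz + d|² ≥ 1/N. -/
lemma moebius_im_formula (α β γ δ : ℝ) (z : ℂ) :
    (((α:ℂ)*z+β)/((γ:ℂ)*z+δ)).im
      = (α*δ - β*γ) * z.im / Complex.normSq ((γ:ℂ)*z+δ) := by
  rcases eq_or_ne ((γ:ℂ)*z+δ) 0 with h|h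
  · simp [h]
  · have h0 : Complex.normSq ((γ:ℂ)*z+δ) ≠ 0 := (Complex.normSq_pos.mpr h).ne'
    rw [Complex.div_im]
    simp only [Complex.normSq_apply, Complex.add_re, Complex.add_im,
      Complex.mul_re, Complex.mul_im, Complex.ofReal_re, Complex.ofReal_im]
    field_simp
    ring

lemma key_coprime (N : ℕ) (hN : 0 < N) (hsq : Squarefree N) (z : ℂ) (hz : 0 < z.im)
    (hdom : ∀ σ : Matrix (Fin 2) (Fin 2) ℝ, IsAtkinLehner N σ →
      (moebius σ z).im ≤ z.im)
    (c d : ℤ) (hcop : IsCoprime c d) (hc : c ≠ 0) :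
    1 / (N : ℝ) ≤ Complex.normSq (c * z + d) := by
  classical
  simp only [IsAtkinLehner, moebius] at hdom
  set g : ℕ := Int.gcd (N : ℤ) c with hg
  have hgdvdN : g ∣ N := by
    have h1 : (g : ℤ) ∣ (N : ℤ) := Int.gcd_dvd_left (N : ℤ) c
    exact_mod_cast h1
  have hgpos : 0 < g := Nat.pos_of_ne_zero (by
    intro h0
    have h1 := Int.gcd_eq_zero_iff.mp h0
    exact hN.ne' (by exact_mod_cast h1.1))
  set r : ℕ := N / g with hr
  have hrg : r * g = N := Nat.div_mul_cancel hgdvdN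
  have hrdvd : r ∣ N := ⟨g, hrg.symm⟩
  have hrpos : 0 < r := Nat.pos_of_ne_zero (by
    intro h0
    rw [h0, zero_mul] at hrg
    exact hN.ne' hrg.symm)
  -- N ∣ r * c
  have hNrc : (N : ℤ) ∣ (r : ℤ) * c := by
    have : (g : ℤ) ∣ c := Int.gcd_dvd_right (N : ℤ) c
    obtain ⟨k, hk⟩ := this
    exact ⟨k, by rw [hk]; push_cast [← hrg]; ring⟩
  -- gcd r c = 1
  have hrc : Nat.Coprime r c.natAbs := by
    by_contra hcon
    obtain ⟨p, hp, hpr, hpc⟩ := Nat.Prime.not_coprime_iff_dvd.mp hcon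
    have hpg : p ∣ g := Nat.dvd_gcd (hpr.trans hrdvd) hpc
    have : p * p ∣ N := by
      rw [← hrg]; exact mul_dvd_mul hpr hpg
    exact hp.ne_one (Nat.isUnit_iff.mp (hsq p this))
  have hrcZ : IsCoprime (r : ℤ) c := Int.isCoprime_iff_gcd_eq_one.mpr (by
    simpa [Int.gcd] using hrc)
  have hrdc : IsCoprime ((r : ℤ) * d) c := hrcZ.mul_left hcop.symm
  obtain ⟨u, v, huv⟩ := hrdc
  -- u * (r * d) + v * c = 1
  have hucop : IsCoprime u c := ⟨(r : ℤ) * d, v, by linarith [huv]⟩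
  -- build σ
  set sr : ℝ := Real.sqrt r with hsr
  have hsrpos : 0 < sr := Real.sqrt_pos.mpr (by exact_mod_cast hrpos)
  have hsr2 : sr * sr = (r : ℝ) := Real.mul_self_sqrt (by positivity)
  set σ : Matrix (Fin 2) (Fin 2) ℝ :=
    !![sr * u, (-v) / sr; sr * c, sr * d] with hσ
  have hcastuv : ((u:ℝ) * ((r:ℝ) * d) + v * c) = 1 := by exact_mod_cast congrArg (Int.cast : ℤ → ℝ) huv
  have hdetkey : sr * (u:ℝ) * (sr * (d:ℝ)) - (-(v:ℝ))/sr * (sr * (c:ℝ)) = 1 := by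
    field_simp
    linear_combination hcastuv + ((u:ℝ) * (d:ℝ)) * hsr2
  have hdet : σ.det = 1 := by
    rw [hσ, Matrix.det_fin_two_of]
    push_cast
    linear_combination hdetkey
  have hAL : ∃ (r' : ℕ) (a b s d' : ℤ), 0 < r' ∧ r' ∣ N ∧ (N : ℤ) ∣ (r' * s) ∧ IsCoprime a s ∧
      σ = !![Real.sqrt r' * a, b / Real.sqrt r'; Real.sqrt r' * s, Real.sqrt r' * d'] ∧
      σ.det = 1 := ⟨r, u, -v, c, d, hrpos, hrdvd, hNrc, hucop, by push_cast [hσ, hsr]; norm_num, hdet⟩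
  have him := hdom σ hAL
  -- compute
  have hσ00 : σ 0 0 = sr * u := by simp [hσ]
  have hσ01 : σ 0 1 = (-v) / sr := by simp [hσ]
  have hσ10 : σ 1 0 = sr * c := by simp [hσ]
  have hσ11 : σ 1 1 = sr * d := by simp [hσ]
  rw [hσ00, hσ01, hσ10, hσ11] at him
  have hform := moebius_im_formula (sr * u) ((-v)/sr) (sr * c) (sr * d) z
  rw [hform] at him
  rw [show (sr * (u:ℝ)) * (sr * (d:ℝ)) - ((-(v:ℝ))/sr) * (sr * (c:ℝ)) = 1 from hdetkey, one_mul] at him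
  -- denominator
  have hw : ((↑(sr * c) : ℂ) * z + (↑(sr * d) : ℂ)) = (sr : ℂ) * ((c : ℂ) * z + (d : ℂ)) := by
    push_cast; ring
  rw [hw] at him
  have hQ : Complex.normSq ((sr:ℂ) * ((c:ℂ)*z + d)) = (r : ℝ) * Complex.normSq ((c:ℂ)*z + d) := by
    rw [Complex.normSq_mul, Complex.normSq_ofReal, hsr2]
  rw [hQ] at him
  set Q := Complex.normSq ((c:ℂ)*z + (d:ℂ)) with hQdef
  have hwne : ((c:ℂ)*z + d) ≠ 0 := by
    intro h0
    have : ((c:ℂ)*z + d).im = 0 := by rw [h0]; simp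
    simp [Complex.add_im, Complex.mul_im] at this
    rcases this with h | h
    · exact hc (by exact_mod_cast h)
    · exact hz.ne' h
  have hQpos : 0 < Q := Complex.normSq_pos.mpr hwne
  have hrQ : 1 ≤ (r : ℝ) * Q := by
    by_contra hlt
    push_neg at hlt
    have h1 : z.im / ((r:ℝ) * Q) > z.im := by
      rw [gt_iff_lt, lt_div_iff₀ (by positivity)]
      nlinarith
    linarith
  have hrleN : (r : ℝ) ≤ N := by exact_mod_cast Nat.le_of_dvd hN hrdvd
  have : 1 / (N : ℝ) ≤ 1 / (r : ℝ) := by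
    apply one_div_le_one_div_of_le (by exact_mod_cast hrpos) hrleN
  calc (1 : ℝ) / N ≤ 1 / r := this
    _ ≤ Q := by rw [div_le_iff₀ (by positivity : (0:ℝ) < (r:ℝ))]; nlinarith

/-- For `z` in the `A₀(N)`-fundamental domain (`N` square-free), every nonzero
integer vector `(c,d)` satisfies `|cz + d|² ≥ 1/N`. -/
theorem lattice_lower_bound_of_atkin_lehner_fundamental (N : ℕ) (hN : 0 < N)
    (hsq : Squarefree N) (z : ℂ) (hz : 0 < z.im)
    (hdom : ∀ σ : Matrix (Fin 2) (Fin 2) ℝ, IsAtkinLehner N σ →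
      (moebius σ z).im ≤ z.im) :
    ∀ c d : ℤ, (c, d) ≠ (0, 0) → 1 / (N : ℝ) ≤ Complex.normSq (c * z + d) := by
  intro c d hcd
  have hN1 : (1:ℝ) ≤ (N:ℝ) := by exact_mod_cast hN
  by_cases hc : c = 0
  · subst hc
    have hd : d ≠ 0 := by simpa [Prod.ext_iff] using hcd
    have : Complex.normSq ((0:ℤ) * z + d) = (d:ℝ)^2 := by
      push_cast; simp [Complex.normSq_ofReal]; ring
    rw [this]
    have hd1 : (1:ℝ) ≤ (d:ℝ)^2 := by
      have : (1:ℤ) ≤ d^2 := by nlinarith [Int.one_le_abs (show d ≠ 0 from hd), sq_abs d]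
      exact_mod_cast this
    calc (1:ℝ)/N ≤ 1 := by rw [div_le_one (by linarith)]; exact hN1
      _ ≤ _ := hd1
  · set g : ℕ := Int.gcd c d with hg
    have hgpos : 0 < g := Int.gcd_pos_of_ne_zero_left d hc
    have hgc : (g:ℤ) ∣ c := Int.gcd_dvd_left c d
    have hgd : (g:ℤ) ∣ d := Int.gcd_dvd_right c d
    obtain ⟨c₁, hc₁⟩ := hgc
    obtain ⟨d₁, hd₁⟩ := hgd
    have hgne : (g:ℤ) ≠ 0 := by exact_mod_cast hgpos.ne'
    have hcop : IsCoprime c₁ d₁ := by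
      have h1 : Int.gcd c₁ d₁ = 1 := by
        have h2 : c₁ = c / g := by rw [hc₁]; rw [Int.mul_ediv_cancel_left _ hgne]
        have h3 : d₁ = d / g := by rw [hd₁]; rw [Int.mul_ediv_cancel_left _ hgne]
        rw [h2, h3, hg]
        exact Int.gcd_div_gcd_div_gcd (by exact_mod_cast hgpos)
      exact Int.isCoprime_iff_gcd_eq_one.mpr h1
    have hc₁ne : c₁ ≠ 0 := by
      intro h0; rw [h0, mul_zero] at hc₁; exact hc hc₁
    have hkey := key_coprime N hN hsq z hz hdom c₁ d₁ hcop hc₁ne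
    have hsplit : ((c:ℂ) * z + d) = (g:ℂ) * ((c₁:ℂ) * z + d₁) := by
      rw [show (c:ℂ) = (g:ℂ) * c₁ by exact_mod_cast congrArg (Int.cast : ℤ → ℂ) hc₁,
          show (d:ℂ) = (g:ℂ) * d₁ by exact_mod_cast congrArg (Int.cast : ℤ → ℂ) hd₁]
      ring
    rw [hsplit, Complex.normSq_mul]
    have hg1 : (1:ℝ) ≤ Complex.normSq (g:ℂ) := by
      have : Complex.normSq ((g:ℕ):ℂ) = ((g:ℝ))^2 := by
        rw [show ((g:ℕ):ℂ) = ((g:ℝ):ℂ) by push_cast; ring, Complex.normSq_ofReal]; ring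
      rw [this]
      have : (1:ℝ) ≤ (g:ℝ) := by exact_mod_cast hgpos
      nlinarith
    calc (1:ℝ)/N ≤ Complex.normSq ((c₁:ℂ)*z + d₁) := hkey
      _ ≤ Complex.normSq (g:ℂ) * Complex.normSq ((c₁:ℂ)*z + d₁) := by
          nlinarith [Complex.normSq_nonneg ((c₁:ℂ)*z + d₁)]
end

section
/- Let γ = [[a,b],[c,d]] be an integer matrix with determinant l > 0 and c > 0, let z = x+iy be in the upper half-plane, and suppose |u_γ(z)| ≤ δ. Then: (i) |a+d| ≤ δ; (ii) |cz+d| ≤ 2δ; and (iii) |cy| ≤ 2δ. -/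
theorem generic_matrix_constraints (a b c d l : ℤ) (hdet : a * d - b * c = l)
    (hl : 0 < l) (hc : 0 < c) (z : ℂ) (hz : 0 < z.im) (δ : ℝ)
    (hu : ‖uMat (a : ℝ) (b : ℝ) (c : ℝ) (d : ℝ) z‖ ≤ δ) :
    |(a : ℝ) + d| ≤ δ ∧
    ‖(c : ℂ) * z + (d : ℂ)‖ ≤ 2 * δ ∧
    (c : ℝ) * z.im ≤ 2 * δ := by
  set y : ℝ := z.im with hy
  have hcR : (0:ℝ) < (c:ℝ) := by exact_mod_cast hc
  have hlR : (0:ℝ) < (l:ℝ) := by exact_mod_cast hl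
  set w : ℂ := (c : ℂ) * z + (d : ℂ) with hwdef
  set u : ℂ := uMat (a : ℝ) (b : ℝ) (c : ℝ) (d : ℝ) z with hudef
  have hwim : w.im = c * y := by
    simp [hwdef, Complex.add_im, Complex.mul_im, hy]
  have hw0 : w ≠ 0 := by
    intro h
    have : w.im = 0 := by rw [h]; rfl
    rw [hwim] at this
    nlinarith
  have hy0 : (y:ℂ) ≠ 0 := by
    simpa using (ne_of_gt hz)
  have hdetC : (a:ℂ) * d - b * c = l := by exact_mod_cast hdet
  have key : ((c:ℂ) * (y:ℂ)) * u
      = (l:ℂ) + (Complex.normSq w : ℂ) - ((a:ℂ) + (d:ℂ)) * w := by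
    rw [← Complex.mul_conj]
    rw [hudef]
    unfold uMat
    rw [← hy]
    have hconjw : (starRingEnd ℂ) w = (c:ℂ) * (starRingEnd ℂ) z + (d:ℂ) := by
      simp [hwdef]
    rw [hconjw, ← hdetC]
    have hw0' : (c:ℂ) * z + (d:ℂ) ≠ 0 := hw0
    push_cast
    rw [hwdef]
    field_simp
    ring
  have him : u.im = -((a:ℝ) + d) := by
    have h := congrArg Complex.im key
    simp [Complex.add_im, Complex.sub_im, Complex.mul_im, hwim] at h
    have hcy : (0:ℝ) < c * y := by positivity
    -- h : relation; solve for u.im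
    nlinarith [h]
  have habs1 : |(a:ℝ) + d| ≤ δ := by
    have : |u.im| ≤ ‖u‖ := Complex.abs_im_le_norm u
    rw [him, abs_neg] at this
    exact this.trans hu
  have hre : (c:ℝ) * y * u.re = l + Complex.normSq w - ((a:ℝ) + d) * w.re := by
    have h := congrArg Complex.re key
    simp [Complex.add_re, Complex.sub_re, Complex.mul_re, Complex.mul_im] at h
    linarith [h]
  have hure : u.re ≤ δ := le_trans (le_trans (le_abs_self _) (Complex.abs_re_le_norm u)) hu
  have hwre : |w.re| ≤ ‖w‖ := Complex.abs_re_le_norm w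
  have hwimle : c * y ≤ ‖w‖ := by
    rw [← hwim]
    exact le_trans (le_abs_self _) (Complex.abs_im_le_norm w)
  have hsq : Complex.normSq w = ‖w‖^2 := (Complex.sq_norm w).symm
  have hδ0 : 0 ≤ δ := le_trans (norm_nonneg u) hu
  have hwabs : ‖w‖ ≤ 2 * δ := by
    have hadre : ((a:ℝ) + d) * w.re ≤ δ * ‖w‖ := by
      calc ((a:ℝ) + d) * w.re ≤ |((a:ℝ) + d) * w.re| := le_abs_self _
        _ = |(a:ℝ) + d| * |w.re| := abs_mul _ _
        _ ≤ δ * ‖w‖ := mul_le_mul habs1 hwre (abs_nonneg _) hδ0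
    have hcyu : (c:ℝ) * y * u.re ≤ ‖w‖ * δ := by
      have hcy : (0:ℝ) < c * y := by positivity
      calc (c:ℝ) * y * u.re ≤ (c * y) * δ := by nlinarith
        _ ≤ ‖w‖ * δ := by nlinarith
    have hwpos : 0 < ‖w‖ := norm_pos_iff.mpr hw0
    nlinarith [hre, hsq]
  refine ⟨habs1, hwabs, le_trans hwimle hwabs⟩
end

section
/- Let α = ±[[m − act, a²t],[−c²t, m + act]] be a parabolic matrix with determinant m² fixing the cusp a/c, and let z = x+iy be in the upper half-plane. Then |u_α(z)| = |2m y i + t|cz − a|²| / y. -/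
lemma uMat_eq (A B C D : ℝ) (z : ℂ) (h : (C : ℂ) * z + D ≠ 0) :
    uMat A B C D z
      = (((C : ℂ) * z + D) * (starRingEnd ℂ) z - ((A : ℂ) * z + B)) / (z.im : ℂ) := by
  unfold uMat
  rw [mul_sub, ← mul_div_assoc, mul_div_cancel_left₀ _ h]

/-- For the parabolic matrix `α = ±[[m − act, a²t],[−c²t, m + act]]` one has
`|u_α(z)| = |2myi + t|cz − a|²| / y`. -/
theorem abs_u_parabolic (m t a c : ℤ) (hm : 0 < m) (hac : IsCoprime a c)
    (s : ℤ) (hs : s = 1 ∨ s = -1) (z : ℂ) (hz : 0 < z.im) :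
    ‖uMat ((s * (m - a * c * t) : ℤ) : ℝ) ((s * (a ^ 2 * t) : ℤ) : ℝ)
        ((s * (-(c ^ 2) * t) : ℤ) : ℝ) ((s * (m + a * c * t) : ℤ) : ℝ) z‖ =
      ‖2 * (m : ℂ) * (z.im : ℂ) * Complex.I +
        (t : ℂ) * (Complex.normSq ((c : ℂ) * z - (a : ℂ)) : ℝ)‖ / z.im := by
  have hy : (z.im : ℂ) ≠ 0 := by exact_mod_cast hz.ne'
  have hyR : ‖(z.im : ℂ)‖ = z.im := by
    rw [Complex.norm_real, Real.norm_of_nonneg hz.le]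
  have hne : ∀ C D : ℝ, (C = 0 → D ≠ 0) → (C : ℂ) * z + D ≠ 0 := by
    intro C D h h0
    by_cases hC : C = 0
    · subst hC; simp at h0; exact h rfl h0
    · have him := congrArg Complex.im h0
      simp [Complex.mul_im] at him
      rcases him with h1 | h1
      · exact hC h1
      · exact hz.ne' h1
  have hnsq : ((Complex.normSq ((c : ℂ) * z - (a : ℂ)) : ℝ) : ℂ)
      = ((c : ℂ) * z - a) * (starRingEnd ℂ) ((c : ℂ) * z - a) :=
    (Complex.mul_conj _).symm
  have hsub : z - (starRingEnd ℂ) z = 2 * (z.im : ℂ) * Complex.I := by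
    rw [Complex.sub_conj]; push_cast; ring
  have h2m : 2 * (m : ℂ) * (z.im : ℂ) * Complex.I = (m : ℂ) * (z - (starRingEnd ℂ) z) := by
    rw [hsub]; ring
  rcases hs with rfl | rfl
  · have hden : (((1 * (-(c ^ 2) * t) : ℤ) : ℝ) : ℂ) * z + (((1 * (m + a * c * t) : ℤ) : ℝ) : ℂ) ≠ 0 := by
      apply hne
      intro hC
      push_cast at hC ⊢
      have : (c:ℝ)^2 * t = 0 := by linarith
      rcases mul_eq_zero.1 this with h1 | h1
      · have hc0 : (c:ℝ) = 0 := by nlinarith [sq_nonneg (c:ℝ)]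
        have h3 : (a:ℝ) * c * t = 0 := by rw [hc0]; ring
        intro h2
        have hm' : (m : ℝ) ≠ 0 := by exact_mod_cast hm.ne'
        apply hm'; linarith
      · have h3 : (a:ℝ) * c * t = 0 := by rw [h1]; ring
        intro h2
        have hm' : (m : ℝ) ≠ 0 := by exact_mod_cast hm.ne'
        apply hm'; linarith
    have key : uMat ((1 * (m - a * c * t) : ℤ) : ℝ) ((1 * (a ^ 2 * t) : ℤ) : ℝ)
        ((1 * (-(c ^ 2) * t) : ℤ) : ℝ) ((1 * (m + a * c * t) : ℤ) : ℝ) z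
        = -(2 * (m : ℂ) * (z.im : ℂ) * Complex.I +
        (t : ℂ) * (Complex.normSq ((c : ℂ) * z - (a : ℂ)) : ℝ)) / (z.im : ℂ) := by
      rw [uMat_eq _ _ _ _ z hden, hnsq, h2m]
      congr 1
      simp only [map_sub, map_mul, map_intCast]
      push_cast
      ring
    rw [key, norm_div, norm_neg, hyR]
  · have hden : (((-1 * (-(c ^ 2) * t) : ℤ) : ℝ) : ℂ) * z + (((-1 * (m + a * c * t) : ℤ) : ℝ) : ℂ) ≠ 0 := by
      apply hne
      intro hC
      push_cast at hC ⊢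
      have : (c:ℝ)^2 * t = 0 := by linarith
      rcases mul_eq_zero.1 this with h1 | h1
      · have hc0 : (c:ℝ) = 0 := by nlinarith [sq_nonneg (c:ℝ)]
        have h3 : (a:ℝ) * c * t = 0 := by rw [hc0]; ring
        intro h2
        have hm' : (m : ℝ) ≠ 0 := by exact_mod_cast hm.ne'
        apply hm'; linarith
      · have h3 : (a:ℝ) * c * t = 0 := by rw [h1]; ring
        intro h2
        have hm' : (m : ℝ) ≠ 0 := by exact_mod_cast hm.ne'
        apply hm'; linarith
    have key : uMat ((-1 * (m - a * c * t) : ℤ) : ℝ) ((-1 * (a ^ 2 * t) : ℤ) : ℝ)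
        ((-1 * (-(c ^ 2) * t) : ℤ) : ℝ) ((-1 * (m + a * c * t) : ℤ) : ℝ) z
        = (2 * (m : ℂ) * (z.im : ℂ) * Complex.I +
        (t : ℂ) * (Complex.normSq ((c : ℂ) * z - (a : ℂ)) : ℝ)) / (z.im : ℂ) := by
      rw [uMat_eq _ _ _ _ z hden, hnsq, h2m]
      congr 1
      simp only [map_sub, map_mul, map_intCast]
      push_cast
      ring
    rw [key, norm_div, hyR]
end

section
/- Let Λ ≥ 1 and δ, y > 0, and suppose the lattice ⟨1, z⟩ ⊂ ℂ (z = x+iy, y > 0) has shortest nonzero vector length ≥ N^{−1/2}. Then the number of triples (a, d, b) of positive integers a, d and integer b with ad prime, ad ≤ Λ, a ≠ d, and |(a−d)z + b| ≤ δy is ≪ (1 + δy·N^{1/2} + δ²y)·Λ^ε. -/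
set_option maxHeartbeats 1000000

open Complex in
lemma lattice_disc_count (N : ℕ) (hN : 0 < N) (z : ℂ) (hy : 0 < z.im)
    (hmin : ∀ m n : ℤ, (m, n) ≠ (0, 0) →
      1 / Real.sqrt N ≤ ‖(m : ℂ) * z + (n : ℂ)‖)
    (δ : ℝ) (hδ : 0 < δ) :
    {q : ℤ × ℤ | q.1 ≠ 0 ∧ ‖(q.1 : ℂ) * z + (q.2 : ℂ)‖ ≤ δ * z.im}.Finite ∧
    ({q : ℤ × ℤ | q.1 ≠ 0 ∧ ‖(q.1 : ℂ) * z + (q.2 : ℂ)‖ ≤ δ * z.im}.ncard : ℝ)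
      ≤ 6 * (1 + δ * z.im * Real.sqrt N + δ ^ 2 * z.im) := by
  set y := z.im with hydef
  set x := z.re with hxdef
  have hsN : (0:ℝ) < Real.sqrt N := Real.sqrt_pos.mpr (by exact_mod_cast hN)
  set L : Set (ℤ × ℤ) :=
    {q : ℤ × ℤ | q.1 ≠ 0 ∧ ‖(q.1 : ℂ) * z + (q.2 : ℂ)‖ ≤ δ * y} with hLdef
  rcases Set.eq_empty_or_nonempty L with hLe | ⟨v, hv1, hv2⟩
  · rw [hLe]
    constructor
    · exact Set.finite_empty
    · simp only [Set.ncard_empty, Nat.cast_zero]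
      positivity
  -- pick primitive vector w
  · have hG : 0 < Int.gcd v.1 v.2 := Int.gcd_pos_of_ne_zero_left _ hv1
    set G : ℕ := Int.gcd v.1 v.2 with hGdef
    set w₁ : ℤ := v.1 / G with hw1def
    set w₂ : ℤ := v.2 / G with hw2def
    have hcop : Int.gcd w₁ w₂ = 1 := Int.gcd_div_gcd_div_gcd hG
    have hv1' : (G : ℤ) * w₁ = v.1 := Int.mul_ediv_cancel' (Int.gcd_dvd_left v.1 v.2)
    have hv2' : (G : ℤ) * w₂ = v.2 := Int.mul_ediv_cancel' (Int.gcd_dvd_right v.1 v.2)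
    have hw₁ : w₁ ≠ 0 := by
      intro h; apply hv1; rw [← hv1', h, mul_zero]
    obtain ⟨a, b, hab⟩ := (Int.isCoprime_iff_gcd_eq_one.mpr hcop)
    -- basic quantities
    set W : ℝ := ‖(w₁ : ℂ) * z + (w₂ : ℂ)‖ with hWdef
    have hWlow : 1 / Real.sqrt N ≤ W := hmin w₁ w₂ (by simp [hw₁])
    have hW0 : (0:ℝ) < W := lt_of_lt_of_le (by positivity) hWlow
    have hWup : W ≤ δ * y := by
      have hcv : ((G : ℂ)) * ((w₁ : ℂ) * z + (w₂ : ℂ)) = (v.1 : ℂ) * z + (v.2 : ℂ) := by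
        rw [← hv1', ← hv2']; push_cast; ring
      have h1 : (G : ℝ) * W = ‖(v.1 : ℂ) * z + (v.2 : ℂ)‖ := by
        rw [← hcv, norm_mul, Complex.norm_natCast]
      have hG1 : (1 : ℝ) ≤ (G : ℝ) := by exact_mod_cast hG
      nlinarith [hv2, hW0]
    have hWsqrt : 1 ≤ W * Real.sqrt N := by
      rw [div_le_iff₀ hsN] at hWlow; linarith
    -- coordinates
    set cc : ℤ × ℤ → ℤ := fun p => w₁ * p.2 - w₂ * p.1 with hccdef
    set tt : ℤ × ℤ → ℤ := fun p => a * p.1 + b * p.2 with httdef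
    set Er : ℝ := ((w₁:ℝ) * x + w₂) * (-(b:ℝ) * x + a) + (w₁:ℝ) * (-(b:ℝ)) * y^2 with hErdef
    have hre : ∀ m n : ℤ, ((m : ℂ) * z + (n : ℂ)).re = (m:ℝ) * x + n := by
      intro m n; simp [Complex.add_re, Complex.mul_re, hxdef]
    have him : ∀ m n : ℤ, ((m : ℂ) * z + (n : ℂ)).im = (m:ℝ) * y := by
      intro m n; simp [Complex.add_im, Complex.mul_im, hydef]
    have hW2 : W ^ 2 = ((w₁:ℝ) * x + w₂)^2 + ((w₁:ℝ) * y)^2 := by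
      rw [hWdef, Complex.sq_norm, Complex.normSq_apply, hre, him]; ring
    have habR : (a:ℝ) * w₁ + (b:ℝ) * w₂ = 1 := by exact_mod_cast hab
    -- key bounds for p ∈ L
    have hq : ∀ p : ℤ × ℤ, p ∈ L →
        |(cc p : ℝ)| ≤ δ * W ∧
        |(tt p : ℝ) * W^2 + (cc p : ℝ) * Er| ≤ W * (δ * y) := by
      intro p hp
      obtain ⟨hp1, hp2⟩ := hp
      set P : ℂ := (p.1 : ℂ) * z + (p.2 : ℂ) with hPdef
      set Q : ℂ := (starRingEnd ℂ) ((w₁ : ℂ) * z + (w₂ : ℂ)) * P with hQdef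
      have hQabs : ‖Q‖ ≤ W * (δ * y) := by
        rw [hQdef, norm_mul, Complex.norm_conj]
        exact mul_le_mul_of_nonneg_left hp2 (norm_nonneg _)
      have hQre : Q.re = ((w₁:ℝ)*x + w₂) * ((p.1:ℝ)*x + p.2) + ((w₁:ℝ)*y) * ((p.1:ℝ)*y) := by
        rw [hQdef, Complex.mul_re, Complex.conj_re, Complex.conj_im, hre, him, hre, him]
        ring
      have hQim : Q.im = -(y * (cc p : ℝ)) := by
        rw [hQdef, Complex.mul_im, Complex.conj_re, Complex.conj_im, hre, him, hre, him]
        push_cast [hccdef]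
        ring
      constructor
      · have h1 : |Q.im| ≤ W * (δ * y) := le_trans (Complex.abs_im_le_norm Q) hQabs
        rw [hQim, abs_neg, abs_mul, abs_of_pos hy] at h1
        have : |(cc p : ℝ)| * y ≤ (δ * W) * y := by nlinarith
        exact le_of_mul_le_mul_right this hy
      · have h1 : |Q.re| ≤ W * (δ * y) := le_trans (Complex.abs_re_le_norm Q) hQabs
        have hid : Q.re = (tt p : ℝ) * W^2 + (cc p : ℝ) * Er := by
          rw [hQre, hW2, hErdef]
          push_cast [httdef, hccdef]
          linear_combination (-(((w₁:ℝ)*x + w₂) * ((p.1:ℝ)*x + p.2) + (w₁:ℝ)*(p.1:ℝ)*y^2)) * habR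
        rw [← hid]; exact h1
    -- counting via injection into a finite box
    set k : ℤ := ⌊δ * W⌋ with hkdef
    set j : ℤ := ⌊2 * δ * y / W⌋ with hjdef
    have hk0 : 0 ≤ k := Int.floor_nonneg.mpr (by positivity)
    have hj0 : 0 ≤ j := Int.floor_nonneg.mpr (by positivity)
    set lo : ℤ → ℤ := fun n => ⌈(-(W * (δ * y)) - (n:ℝ) * Er) / W^2⌉ with hlodef
    set χ : ℤ × ℤ → ℤ × ℤ := fun p => (cc p, tt p - lo (cc p)) with hχdef
    set F : Finset (ℤ × ℤ) := Finset.Icc (-k) k ×ˢ Finset.Icc 0 j with hFdef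
    have hW2pos : (0:ℝ) < W^2 := by positivity
    have hmem : ∀ p ∈ L, χ p ∈ F := by
      intro p hp
      obtain ⟨hc, ht⟩ := hq p hp
      rw [abs_le] at hc ht
      simp only [hFdef, hχdef, Finset.mem_product, Finset.mem_Icc]
      refine ⟨⟨?_, ?_⟩, ?_, ?_⟩
      · have h1 : (-(cc p) : ℤ) ≤ k := Int.le_floor.mpr (by push_cast; linarith [hc.1])
        omega
      · exact Int.le_floor.mpr hc.2
      · have h1 : lo (cc p) ≤ tt p := by
          apply Int.ceil_le.mpr
          rw [div_le_iff₀ hW2pos]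
          linarith [ht.1]
        omega
      · apply Int.le_floor.mpr
        have h1 : (tt p : ℝ) ≤ (W * (δ * y) - (cc p : ℝ) * Er) / W^2 := by
          rw [le_div_iff₀ hW2pos]; linarith [ht.2]
        have h2 : (-(W * (δ * y)) - (cc p : ℝ) * Er) / W^2 ≤ ((lo (cc p) : ℤ) : ℝ) :=
          Int.le_ceil _
        have h3 : (W * (δ * y) - (cc p : ℝ) * Er) / W^2
            - (-(W * (δ * y)) - (cc p : ℝ) * Er) / W^2 = 2 * δ * y / W := by
          field_simp
          ring
        push_cast
        linarith
    have hinj : Set.InjOn χ L := by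
      intro p hp p' hp' he
      have h1 : cc p = cc p' := congrArg Prod.fst he
      have h2 : tt p = tt p' := by
        have h3 := congrArg Prod.snd he
        simp only [hχdef] at h3
        rw [h1] at h3
        omega
      have i1 : ∀ r : ℤ × ℤ, r.1 = tt r * w₁ - cc r * b := by
        intro r; simp only [httdef, hccdef]; linear_combination (-r.1) * hab
      have i2 : ∀ r : ℤ × ℤ, r.2 = tt r * w₂ + cc r * a := by
        intro r; simp only [httdef, hccdef]; linear_combination (-r.2) * hab
      have e1 : p.1 = p'.1 := by rw [i1 p, i1 p', h1, h2]
      have e2 : p.2 = p'.2 := by rw [i2 p, i2 p', h1, h2]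
      exact Prod.ext e1 e2
    have himg : χ '' L ⊆ ↑F := by
      rintro _ ⟨p, hp, rfl⟩; exact hmem p hp
    have hLfin : L.Finite := Set.Finite.of_finite_image (F.finite_toSet.subset himg) hinj
    refine ⟨hLfin, ?_⟩
    have hcard : L.ncard ≤ F.card := by
      calc L.ncard = (χ '' L).ncard := (Set.ncard_image_of_injOn hinj).symm
        _ ≤ (↑F : Set (ℤ × ℤ)).ncard := Set.ncard_le_ncard himg F.finite_toSet
        _ = F.card := Set.ncard_coe_finset F
    have hFcard : (F.card : ℝ) ≤ (2 * (δ * W) + 1) * (2 * δ * y / W + 1) := by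
      rw [hFdef, Finset.card_product]
      push_cast
      have c1 : ((Finset.Icc (-k) k).card : ℝ) ≤ 2 * (δ * W) + 1 := by
        rw [Int.card_Icc]
        have h1 : ((k + 1 - -k).toNat : ℝ) = 2*(k:ℝ)+1 := by
          have h2 : ((k + 1 - -k).toNat : ℤ) = 2*k+1 := by
            rw [Int.toNat_of_nonneg (by omega)]; ring
          exact_mod_cast h2
        rw [h1]
        have := Int.floor_le (δ * W)
        rw [← hkdef] at this
        linarith
      have c2 : ((Finset.Icc (0:ℤ) j).card : ℝ) ≤ 2 * δ * y / W + 1 := by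
        rw [Int.card_Icc]
        have h1 : ((j + 1 - 0).toNat : ℝ) = (j:ℝ)+1 := by
          have h2 : ((j + 1 - 0).toNat : ℤ) = j+1 := by
            rw [Int.toNat_of_nonneg (by omega)]; ring
          exact_mod_cast h2
        rw [h1]
        have := Int.floor_le (2 * δ * y / W)
        rw [← hjdef] at this
        linarith
      have hnn : (0:ℝ) ≤ ((Finset.Icc (0:ℤ) j).card : ℝ) := Nat.cast_nonneg _
      have hδW : (0:ℝ) ≤ δ * W := mul_nonneg hδ.le hW0.le
      have hb : (0:ℝ) ≤ 2 * (δ * W) + 1 := by linarith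
      exact mul_le_mul c1 c2 hnn hb
    have hexp : (2 * (δ * W) + 1) * (2 * δ * y / W + 1)
        = 4 * δ^2 * y + 2 * (δ * W) + 2 * δ * y / W + 1 := by
      field_simp
      ring
    have hdiv : 2 * δ * y / W ≤ 2 * δ * y * Real.sqrt N := by
      rw [div_le_iff₀ hW0]; nlinarith [hWsqrt, hδ, hy]
    have h2dW : 2 * (δ * W) ≤ 2 * δ * (δ * y) := by nlinarith [hWup, hδ]
    have hpos1 : (0:ℝ) ≤ δ * y * Real.sqrt N := by positivity
    have hpos2 : (0:ℝ) ≤ δ ^ 2 * y := by positivity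
    calc (L.ncard : ℝ) ≤ (F.card : ℝ) := by exact_mod_cast hcard
      _ ≤ (2 * (δ * W) + 1) * (2 * δ * y / W + 1) := hFcard
      _ ≤ 6 * (1 + δ * y * Real.sqrt N + δ ^ 2 * y) := by
          rw [hexp]
          nlinarith [hdiv, h2dW, hpos1, hpos2]

/-- Upper-triangular count for prime determinant: the number of triples
`(a, d, b)` with `a, d > 0`, `ad` prime, `ad ≤ Λ`, `a ≠ d` and
`|(a−d)z + b| ≤ δy` is `≪ (1 + δyN^{1/2} + δ²y)·Λ^ε`, provided the lattice
`⟨1, z⟩` has shortest nonzero vector of length `≥ N^{−1/2}`. -/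
theorem upper_triangular_prime_count (ε : ℝ) (hε : 0 < ε) :
    ∃ C : ℝ, 0 < C ∧
      ∀ (N : ℕ), 0 < N → ∀ (z : ℂ), 0 < z.im →
        (∀ m n : ℤ, (m, n) ≠ (0, 0) →
          1 / Real.sqrt N ≤ ‖(m : ℂ) * z + (n : ℂ)‖) →
        ∀ (Λ δ : ℝ), 1 ≤ Λ → 0 < δ →
          (Set.ncard {p : ℤ × ℤ × ℤ | 0 < p.1 ∧ 0 < p.2.1 ∧
              Prime (p.1 * p.2.1) ∧ ((p.1 * p.2.1 : ℤ) : ℝ) ≤ Λ ∧ p.1 ≠ p.2.1 ∧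
              ‖((p.1 : ℂ) - (p.2.1 : ℂ)) * z + (p.2.2 : ℂ)‖ ≤
                δ * z.im} : ℝ) ≤
            C * (1 + δ * z.im * Real.sqrt N + δ ^ 2 * z.im) * Λ ^ ε := by
  refine ⟨6, by norm_num, ?_⟩
  intro N hN z hy hmin Λ δ hΛ hδ
  obtain ⟨hLfin, hLcard⟩ := lattice_disc_count N hN z hy hmin δ hδ
  set L : Set (ℤ × ℤ) :=
    {q : ℤ × ℤ | q.1 ≠ 0 ∧ ‖(q.1 : ℂ) * z + (q.2 : ℂ)‖ ≤ δ * z.im} with hLdef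
  set S : Set (ℤ × ℤ × ℤ) := {p : ℤ × ℤ × ℤ | 0 < p.1 ∧ 0 < p.2.1 ∧
              Prime (p.1 * p.2.1) ∧ ((p.1 * p.2.1 : ℤ) : ℝ) ≤ Λ ∧ p.1 ≠ p.2.1 ∧
              ‖((p.1 : ℂ) - (p.2.1 : ℂ)) * z + (p.2.2 : ℂ)‖ ≤
                δ * z.im} with hSdef
  have hSL : ∀ p ∈ S, ((p.1 - p.2.1, p.2.2) : ℤ × ℤ) ∈ L := by
    intro p hp
    obtain ⟨ha, hd, hpr, hl, hne, habs⟩ := hp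
    refine ⟨by simpa using sub_ne_zero_of_ne hne, ?_⟩
    have hc : ((p.1 - p.2.1 : ℤ) : ℂ) = (p.1 : ℂ) - (p.2.1 : ℂ) := by push_cast; ring
    simpa [hc] using habs
  have hone : ∀ p ∈ S, p.1 = 1 ∨ p.2.1 = 1 := by
    intro p hp
    obtain ⟨ha, hd, hpr, -, -, -⟩ := hp
    rcases hpr.irreducible.isUnit_or_isUnit rfl with h | h
    · rcases Int.isUnit_iff.mp h with h1 | h1
      · exact Or.inl h1
      · omega
    · rcases Int.isUnit_iff.mp h with h1 | h1
      · exact Or.inr h1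
      · omega
  set Φ : ℤ × ℤ × ℤ → ℤ × ℤ := fun p => (p.1 - p.2.1, p.2.2) with hΦdef
  have hinj : Set.InjOn Φ S := by
    intro p hp q hq he
    have he' : ((p.1 - p.2.1, p.2.2) : ℤ × ℤ) = (q.1 - q.2.1, q.2.2) := he
    rw [Prod.mk.injEq] at he'
    obtain ⟨e1, e2⟩ := he'
    have o1 := hone p hp
    have o2 := hone q hq
    have ha := hp.1
    have hd := hp.2.1
    have hne := hp.2.2.2.2.1
    have ha' := hq.1
    have hd' := hq.2.1
    have hne' := hq.2.2.2.2.1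
    have e3 : p.1 = q.1 ∧ p.2.1 = q.2.1 := by omega
    exact Prod.ext e3.1 (Prod.ext e3.2 e2)
  have hcard : S.ncard ≤ L.ncard := by
    calc S.ncard = (Φ '' S).ncard := (Set.ncard_image_of_injOn hinj).symm
      _ ≤ L.ncard := Set.ncard_le_ncard (by rintro _ ⟨p, hp, rfl⟩; exact hSL p hp) hLfin
  have hrpow : (1:ℝ) ≤ Λ ^ ε := by
    calc (1:ℝ) = Λ ^ (0:ℝ) := (Real.rpow_zero Λ).symm
      _ ≤ Λ ^ ε := Real.rpow_le_rpow_of_exponent_le hΛ hε.le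
  calc (S.ncard : ℝ) ≤ (L.ncard : ℝ) := by exact_mod_cast hcard
    _ ≤ 6 * (1 + δ * z.im * Real.sqrt N + δ ^ 2 * z.im) := hLcard
    _ ≤ 6 * (1 + δ * z.im * Real.sqrt N + δ ^ 2 * z.im) * Λ ^ ε := by
        apply le_mul_of_one_le_right ?_ hrpow
        have : (0:ℝ) ≤ Real.sqrt N := Real.sqrt_nonneg _
        positivity
end
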